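/- For m even and gcd(i,m)=1, the map F_1(x) = x + a·tr((x/a)^{2^i+1}) on F_{2^m} is an involution for every a ∈ F_{2^m}^*. -/
import Mathlib

open Algebra

section aux

variable (m : ℕ) [Fact (0 < m)]

noncomputable def frobAlgEquiv (m : ℕ) : GaloisField 2 m ≃ₐ[ZMod 2] GaloisField 2 m :=
  AlgEquiv.ofRingEquiv (f := frobeniusEquiv (GaloisField 2 m) 2) (by
    intro r
    show frobenius (GaloisField 2 m) 2 (algebraMap (ZMod 2) _ r) = _
    rw [frobenius_def, ← map_pow, ZMod.pow_card])

lemma trace_sq (m : ℕ) (y : GaloisField 2 m) :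
    Algebra.trace (ZMod 2) (GaloisField 2 m) (y ^ 2) =
      Algebra.trace (ZMod 2) (GaloisField 2 m) y := by
  have : y ^ 2 = frobAlgEquiv m y := by
    simp [frobAlgEquiv, frobenius_def]
  rw [this, Algebra.trace_eq_of_algEquiv]

lemma trace_pow_pow (m i : ℕ) (y : GaloisField 2 m) :
    Algebra.trace (ZMod 2) (GaloisField 2 m) (y ^ 2 ^ i) =
      Algebra.trace (ZMod 2) (GaloisField 2 m) y := by
  induction i with
  | zero => simp
  | succ n ih =>
    rw [pow_succ, pow_mul, trace_sq, ih]

end aux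

/-- For `m` even, `gcd(i,m) = 1`, the map `F₁(x) = x + a·tr((x/a)^{2^i+1})` on
`𝔽_{2^m}` is an involution for every `a ≠ 0`. -/
theorem stmt_18 (m i : ℕ) (hm : 0 < m) (hme : Even m) (hi : Nat.gcd i m = 1)
    (a : GaloisField 2 m) (ha : a ≠ 0) :
    ∀ x : GaloisField 2 m,
      (fun x : GaloisField 2 m =>
        x + a * algebraMap (ZMod 2) (GaloisField 2 m)
              (Algebra.trace (ZMod 2) (GaloisField 2 m) ((x / a) ^ (2 ^ i + 1))))^[2] x
        = x := by
  intro x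
  simp only [Function.iterate_succ, Function.iterate_zero, Function.comp_apply, id_eq]
  set T : GaloisField 2 m → ZMod 2 := fun z =>
    Algebra.trace (ZMod 2) (GaloisField 2 m) ((z / a) ^ (2 ^ i + 1)) with hT
  show (x + a * algebraMap (ZMod 2) _ (T x)) +
      a * algebraMap (ZMod 2) _ (T (x + a * algebraMap (ZMod 2) _ (T x))) = x
  rcases (by decide : ∀ t : ZMod 2, t = 0 ∨ t = 1) (T x) with h0 | h1
  · rw [h0]; simp only [map_zero, mul_zero, add_zero]; rw [h0]; simp
  · rw [h1]
    have htrone : Algebra.trace (ZMod 2) (GaloisField 2 m) 1 = 0 := by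
      have := Algebra.trace_algebraMap (S := GaloisField 2 m) (1 : ZMod 2)
      rw [map_one] at this
      rw [this, GaloisField.finrank 2 hm.ne', nsmul_eq_mul, mul_one]
      obtain ⟨k, hk⟩ := hme
      rw [hk]
      push_cast
      rw [← two_mul, show (2:ZMod 2) = 0 by decide, zero_mul]
    have key : T (x + a * 1) = 1 := by
      have hya : (x + a * 1) / a = x / a + 1 := by
        field_simp
      rw [hT]
      simp only [hya]
      have expand : (x / a + 1) ^ (2 ^ i + 1)
          = (x / a) ^ (2 ^ i + 1) + (x / a) ^ (2 ^ i) + (x / a) + 1 := by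
        have hchar : (x / a + 1) ^ (2 ^ i) = (x / a) ^ (2 ^ i) + 1 := by
          rw [add_pow_char_pow]
          simp
        rw [pow_succ, hchar]
        ring
      rw [expand, map_add, map_add, map_add, htrone, trace_pow_pow]
      have : Algebra.trace (ZMod 2) (GaloisField 2 m) ((x/a)^(2^i+1)) = 1 := h1
      rw [this]
      ring_nf
      rw [show (2:ZMod 2) = 0 by decide]
      ring
    rw [map_one, key, map_one]
    ring_nf
    rw [show (2 : GaloisField 2 m) = 0 from CharTwo.two_eq_zero]
    ring
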